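/- arXiv:0806.2985 — 5 statements merged into one kernel-verified Lean document; each statement's English description precedes it below -/
import Mathlib

section
/- Let f(z) = (λ/2)·exp(−λ|z|) be the density of the centered double exponential (Laplace) distribution with parameter λ > 0, and fix δ₀ > 0. Then there exist constants C > 0 and θ₀ > 0 (depending only on λ and δ₀) such that for all θ with |θ| ≤ θ₀ and all δ ∈ (0, δ₀], | ∫_ℝ { (f(z+θ)/f(z))^{1+δ} − 1 } f(z) dz − (1/2)·δ(1+δ)·θ²·λ² | ≤ C·δ(1+δ)·|θ|³. -/
/-!
The likelihood ratio of the Laplace density raised to the power `1 + δ`, times the density, is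
`(λ/2) exp(δλ|z| - (1+δ)λ|z+θ|)`: an exponential of an affine function on each of
`(-∞, -|θ|]`, `[-|θ|, 0]`, `[0, ∞)` (after reflecting `z ↦ -z` when `θ < 0`). Integrating piece
by piece, the integral in question equals `E e^X - 1`, where `X` takes the values `δλ|θ|` and
`-(1+δ)λ|θ|` with weights `(1+δ)/(1+2δ)` and `δ/(1+2δ)`. This `X` has mean zero and second
moment `δ(1+δ)λ²θ²`, so the cubic Taylor bound for `exp` on `[-1, 1]` gives the expansion.
-/

open MeasureTheory Real Set

theorem integral_exp_mul {c : ℝ} (hc : c ≠ 0) (a b : ℝ) :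
    ∫ x in a..b, exp (c * x) = (exp (c * b) - exp (c * a)) / c := by
  rw [intervalIntegral.integral_comp_mul_left exp hc, integral_exp, smul_eq_mul]
  field_simp

section TwoSidedExp

variable {p q θ : ℝ}

theorem exp_mul_abs_sub_mul_abs_add_eqOn_Iic (hθ : 0 ≤ θ) :
    EqOn (fun z => exp (q * |z| - p * |z + θ|)) (fun z => exp (p * θ) * exp ((p - q) * z))
      (Iic (-θ)) := by
  intro z (hz : z ≤ -θ)
  simp only [abs_of_nonpos (by linarith : z ≤ 0), abs_of_nonpos (by linarith : z + θ ≤ 0),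
    ← exp_add]
  ring_nf

theorem exp_mul_abs_sub_mul_abs_add_eqOn_Ioc :
    EqOn (fun z => exp (q * |z| - p * |z + θ|)) (fun z => exp (-(p * θ)) * exp (-(p + q) * z))
      (Ioc (-θ) 0) := by
  rintro z ⟨hz₁, hz₂⟩
  simp only [abs_of_nonpos hz₂, abs_of_nonneg (by linarith : 0 ≤ z + θ), ← exp_add]
  ring_nf

theorem exp_mul_abs_sub_mul_abs_add_eqOn_Ioi (hθ : 0 ≤ θ) :
    EqOn (fun z => exp (q * |z| - p * |z + θ|)) (fun z => exp (-(p * θ)) * exp (-(p - q) * z))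
      (Ioi 0) := by
  intro z (hz : 0 < z)
  simp only [abs_of_pos hz, abs_of_nonneg (by linarith : 0 ≤ z + θ), ← exp_add]
  ring_nf

theorem integrable_and_integral_exp_mul_abs_sub_mul_abs_add_of_nonneg (hθ : 0 ≤ θ)
    (hpq : |q| < p) :
    Integrable (fun z => exp (q * |z| - p * |z + θ|)) ∧
      ∫ z, exp (q * |z| - p * |z + θ|) =
        (exp (q * θ) + exp (-(p * θ))) / (p - q) + (exp (q * θ) - exp (-(p * θ))) / (p + q) := by
  obtain ⟨hqp, hpq'⟩ := abs_lt.mp hpq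
  set g := fun z => exp (q * |z| - p * |z + θ|)
  have hg : Continuous g := by fun_prop
  have int₁ : IntegrableOn g (Iic (-θ)) :=
    IntegrableOn.congr_fun ((integrableOn_exp_mul_Iic (by linarith) _).const_mul _)
      (exp_mul_abs_sub_mul_abs_add_eqOn_Iic hθ).symm measurableSet_Iic
  have int₂ : IntegrableOn g (Ioc (-θ) 0) := hg.integrableOn_Ioc
  have int₃ : IntegrableOn g (Ioi 0) :=
    IntegrableOn.congr_fun ((integrableOn_exp_mul_Ioi (by linarith) _).const_mul _)
      (exp_mul_abs_sub_mul_abs_add_eqOn_Ioi hθ).symm measurableSet_Ioi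
  have hsplit : Ioc (-θ) 0 ∪ Ioi 0 = Ioi (-θ) := Ioc_union_Ioi_eq_Ioi (by linarith)
  have int₂₃ : IntegrableOn g (Ioi (-θ)) := hsplit ▸ int₂.union int₃
  refine ⟨integrableOn_univ.mp (Iic_union_Ioi (a := -θ) ▸ int₁.union int₂₃), ?_⟩
  have v₁ : ∫ z in Iic (-θ), g z = exp (q * θ) / (p - q) := by
    rw [setIntegral_congr_fun measurableSet_Iic (exp_mul_abs_sub_mul_abs_add_eqOn_Iic hθ),
      integral_const_mul, integral_exp_mul_Iic (by linarith), mul_div_assoc', ← exp_add]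
    ring_nf
  have v₂ : ∫ z in Ioc (-θ) 0, g z = (exp (q * θ) - exp (-(p * θ))) / (p + q) := by
    rw [setIntegral_congr_fun measurableSet_Ioc exp_mul_abs_sub_mul_abs_add_eqOn_Ioc,
      ← intervalIntegral.integral_of_le (by linarith), intervalIntegral.integral_const_mul,
      integral_exp_mul (by linarith), mul_zero, exp_zero,
      show -(p + q) * -θ = p * θ + q * θ by ring, exp_add, exp_neg]
    field_simp
    ring
  have v₃ : ∫ z in Ioi 0, g z = exp (-(p * θ)) / (p - q) := by
    rw [setIntegral_congr_fun measurableSet_Ioi (exp_mul_abs_sub_mul_abs_add_eqOn_Ioi hθ),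
      integral_const_mul, integral_exp_mul_Ioi (by linarith), mul_zero, exp_zero]
    field_simp
  rw [← intervalIntegral.integral_Iic_add_Ioi int₁ int₂₃, ← hsplit,
    setIntegral_union Ioc_disjoint_Ioi_same measurableSet_Ioi int₂ int₃, v₁, v₂, v₃]
  ring

theorem integrable_and_integral_exp_mul_abs_sub_mul_abs_add (hpq : |q| < p) (θ : ℝ) :
    Integrable (fun z => exp (q * |z| - p * |z + θ|)) ∧
      ∫ z, exp (q * |z| - p * |z + θ|) =
        (exp (q * |θ|) + exp (-(p * |θ|))) / (p - q) +
          (exp (q * |θ|) - exp (-(p * |θ|))) / (p + q) := by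
  rcases le_total 0 θ with hθ | hθ
  · rw [abs_of_nonneg hθ]
    exact integrable_and_integral_exp_mul_abs_sub_mul_abs_add_of_nonneg hθ hpq
  · obtain ⟨hint, hval⟩ :=
      integrable_and_integral_exp_mul_abs_sub_mul_abs_add_of_nonneg (neg_nonneg.mpr hθ) hpq
    have hreflect : (fun z => exp (q * |z| - p * |z + θ|)) =
        fun z => exp (q * |-z| - p * |-z + -θ|) := by
      funext z
      rw [abs_neg, ← neg_add, abs_neg]
    rw [abs_of_nonpos hθ, hreflect]
    exact ⟨hint.comp_neg, (integral_neg_eq_self _ _).trans hval⟩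

end TwoSidedExp

noncomputable def laplaceDensity (lam z : ℝ) : ℝ := lam / 2 * exp (-(lam * |z|))

section LaplaceDensity

variable {lam : ℝ}

theorem laplaceDensity_ratio_rpow_mul (hlam : lam ≠ 0) (s θ z : ℝ) :
    (laplaceDensity lam (z + θ) / laplaceDensity lam z) ^ s * laplaceDensity lam z =
      lam / 2 * exp ((s - 1) * lam * |z| - s * lam * |z + θ|) := by
  unfold laplaceDensity
  rw [mul_div_mul_left _ _ (div_ne_zero hlam two_ne_zero), ← exp_sub, ← exp_mul,
    mul_left_comm, ← exp_add]
  ring_nf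

theorem integrable_and_integral_laplaceDensity_ratio_rpow_mul (hlam : 0 < lam) {δ : ℝ}
    (hδ : -(1 / 2) < δ) (θ : ℝ) :
    Integrable (fun z =>
        (laplaceDensity lam (z + θ) / laplaceDensity lam z) ^ (1 + δ) * laplaceDensity lam z) ∧
      ∫ z, (laplaceDensity lam (z + θ) / laplaceDensity lam z) ^ (1 + δ) * laplaceDensity lam z =
        ((1 + δ) * exp (δ * (lam * |θ|)) + δ * exp (-((1 + δ) * (lam * |θ|)))) / (1 + 2 * δ) := by
  have hpq : |(1 + δ - 1) * lam| < (1 + δ) * lam := by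
    rw [abs_lt]; constructor <;> nlinarith
  obtain ⟨hint, hval⟩ := integrable_and_integral_exp_mul_abs_sub_mul_abs_add hpq θ
  simp_rw [laplaceDensity_ratio_rpow_mul hlam.ne']
  refine ⟨hint.const_mul _, ?_⟩
  rw [integral_const_mul, hval, show (1 + δ) * lam - (1 + δ - 1) * lam = lam by ring,
    show (1 + δ) * lam + (1 + δ - 1) * lam = (1 + 2 * δ) * lam by ring,
    show (1 + δ - 1) * lam * |θ| = δ * (lam * |θ|) by ring, mul_assoc (1 + δ)]
  have h2δ : 1 + 2 * δ ≠ 0 := by linarith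
  field_simp
  ring

theorem integral_laplaceDensity_ratio_rpow_sub_one_mul (hlam : 0 < lam) {δ : ℝ}
    (hδ : -(1 / 2) < δ) (θ : ℝ) :
    ∫ z, ((laplaceDensity lam (z + θ) / laplaceDensity lam z) ^ (1 + δ) - 1) *
        laplaceDensity lam z =
      ((1 + δ) * exp (δ * (lam * |θ|)) + δ * exp (-((1 + δ) * (lam * |θ|)))) / (1 + 2 * δ) -
        1 := by
  obtain ⟨hint, hval⟩ := integrable_and_integral_laplaceDensity_ratio_rpow_mul hlam hδ θ
  obtain ⟨hint₀, hval₀⟩ := integrable_and_integral_laplaceDensity_ratio_rpow_mul hlam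
    (by norm_num : -(1 / 2) < (0 : ℝ)) 0
  have hpos : ∀ z, laplaceDensity lam z ≠ 0 := fun z => by unfold laplaceDensity; positivity
  simp only [add_zero, rpow_one, div_self (hpos _), one_mul] at hint₀ hval₀
  simp_rw [sub_mul, one_mul]
  rw [integral_sub hint hint₀, hval, hval₀]
  norm_num

end LaplaceDensity

theorem abs_exp_sub_one_sub_id_sub_sq_div_two_le {x : ℝ} (hx : |x| ≤ 1) :
    |exp x - 1 - x - x ^ 2 / 2| ≤ 2 / 9 * |x| ^ 3 := by
  have h := Real.exp_bound hx (n := 3) (by norm_num)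
  norm_num [Finset.sum_range_succ, Nat.factorial] at h
  rw [show exp x - 1 - x - x ^ 2 / 2 = exp x - (1 + x + x ^ 2 / 2) by ring, mul_comm]
  exact h

theorem abs_two_point_exp_mean_sub_quadratic_le {δ a : ℝ} (hδ : 0 ≤ δ)
    (ha : (1 + δ) * |a| ≤ 1) :
    |((1 + δ) * exp (δ * a) + δ * exp (-((1 + δ) * a))) / (1 + 2 * δ) - 1 -
        1 / 2 * δ * (1 + δ) * a ^ 2| ≤ 2 / 9 * (1 + 2 * δ) * δ * (1 + δ) * |a| ^ 3 := by
  set x := δ * a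
  set y := -((1 + δ) * a)
  have h2δ : 0 < 1 + 2 * δ := by linarith
  have hx : |x| = δ * |a| := by rw [abs_mul, abs_of_nonneg hδ]
  have hy : |y| = (1 + δ) * |a| := by rw [abs_neg, abs_mul, abs_of_nonneg (by linarith)]
  have hRx := abs_exp_sub_one_sub_id_sub_sq_div_two_le (x := x) (by nlinarith [abs_nonneg a])
  have hRy := abs_exp_sub_one_sub_id_sub_sq_div_two_le (x := y) (by linarith)
  have hcancel : ((1 + δ) * exp x + δ * exp y) / (1 + 2 * δ) - 1 - 1 / 2 * δ * (1 + δ) * a ^ 2 =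
      ((1 + δ) * (exp x - 1 - x - x ^ 2 / 2) + δ * (exp y - 1 - y - y ^ 2 / 2)) / (1 + 2 * δ) := by
    field_simp
    ring
  rw [hcancel, abs_div, abs_of_pos h2δ, div_le_iff₀ h2δ]
  calc |(1 + δ) * (exp x - 1 - x - x ^ 2 / 2) + δ * (exp y - 1 - y - y ^ 2 / 2)|
      ≤ (1 + δ) * (2 / 9 * |x| ^ 3) + δ * (2 / 9 * |y| ^ 3) := by
        refine (abs_add_le _ _).trans ?_
        rw [abs_mul, abs_mul, abs_of_nonneg (by linarith), abs_of_nonneg hδ]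
        gcongr
    _ = 2 / 9 * δ * (1 + δ) * (δ ^ 2 + (1 + δ) ^ 2) * |a| ^ 3 := by rw [hx, hy]; ring
    _ ≤ 2 / 9 * δ * (1 + δ) * (1 + 2 * δ) ^ 2 * |a| ^ 3 := by gcongr; nlinarith
    _ = _ := by ring

/-- For the centered Laplace density `f(z) = (λ/2)exp(−λ|z|)` and any `δ₀ > 0`,
there are `C > 0` and `θ₀ > 0` such that for all `|θ| ≤ θ₀` and all `δ ∈ (0, δ₀]`,
`| ∫ ((f(z+θ)/f(z))^{1+δ} − 1) f(z) dz − (1/2)δ(1+δ)θ²λ² | ≤ C·δ(1+δ)|θ|³`. -/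
theorem laplace_E2_expansion (lam : ℝ) (hlam : 0 < lam)
    (f : ℝ → ℝ) (hf : ∀ z : ℝ, f z = (lam / 2) * Real.exp (-(lam * |z|)))
    (δ₀ : ℝ) (hδ₀ : 0 < δ₀) :
    ∃ C > (0 : ℝ), ∃ θ₀ > (0 : ℝ), ∀ θ : ℝ, |θ| ≤ θ₀ →
      ∀ δ : ℝ, 0 < δ → δ ≤ δ₀ →
        |(∫ z : ℝ, ((f (z + θ) / f z) ^ (1 + δ : ℝ) - 1) * f z)
            - (1 / 2) * δ * (1 + δ) * θ ^ 2 * lam ^ 2|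
          ≤ C * δ * (1 + δ) * |θ| ^ 3 := by
  obtain rfl : f = laplaceDensity lam := funext hf
  refine ⟨2 / 9 * (1 + 2 * δ₀) * lam ^ 3, by positivity, 1 / ((1 + δ₀) * lam), by positivity,
    fun θ hθ δ hδ hδδ => ?_⟩
  have hscale : |(lam * |θ|)| = lam * |θ| := by rw [abs_mul, abs_abs, abs_of_pos hlam]
  have hsmall : (1 + δ) * |(lam * |θ|)| ≤ 1 := by
    rw [le_div_iff₀' (by positivity)] at hθ
    rw [hscale]
    nlinarith [abs_nonneg θ]
  calc _ = |((1 + δ) * exp (δ * (lam * |θ|)) + δ * exp (-((1 + δ) * (lam * |θ|)))) /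
          (1 + 2 * δ) - 1 - 1 / 2 * δ * (1 + δ) * (lam * |θ|) ^ 2| := by
        rw [integral_laplaceDensity_ratio_rpow_sub_one_mul hlam (by linarith), mul_pow, sq_abs]
        ring_nf
    _ ≤ 2 / 9 * (1 + 2 * δ) * δ * (1 + δ) * |(lam * |θ|)| ^ 3 :=
        abs_two_point_exp_mean_sub_quadratic_le hδ.le hsmall
    _ = 2 / 9 * (1 + 2 * δ) * lam ^ 3 * δ * (1 + δ) * |θ| ^ 3 := by rw [hscale]; ring
    _ ≤ _ := by gcongr
end

section
/- Let ψ: [0,1] → ℝ be continuous of finite total variation TV(ψ), let 0 ≤ X_1 < X_2 < ⋯ < X_n ≤ 1, let 1 < k < n, and set t_{1k} := X_k − X_1 > 0, t_{1n} := X_n − X_1 > 0. Let H_n denote the empirical distribution function of X_1,…,X_n, H_n(x) := (1/n)#{i : X_i ≤ x}. Then (1/n)·Σ_{i=1}^k ( ψ((X_i − X_1)/t_{1n}) − ψ((X_i − X_1)/t_{1k}) )² ≤ TV(ψ)² · sup_{y ∈ [0,1]} ( H_n(y·t_{1n} + X_1) − H_n((y·t_{1k} + X_1)−) ), where H_n(x−)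 denotes the left limit. -/
/-!
Put `a i = (X i - X 1) / t1n ≤ b i = (X i - X 1) / t1k`. Each squared increment
`(ψ (a i) - ψ (b i))²` is at most `TV(ψ) · |ψ (a i) - ψ (b i)|`. If at most `m` of the intervals
`[a i, b i]` share a point then, both endpoint sequences being increasing, intervals whose
indices differ by at least `m` are disjoint; so the residue classes mod `m` split the intervals
into `m` disjoint families, each contributing at most `TV(ψ)` to `∑ |ψ (a i) - ψ (b i)|`.
Finally `y ∈ [a i, b i]` iff `X i ∈ [y t1k + X 1, y t1n + X 1]`, so for a deepest point `y`,
`m ≤ n (H_n(y t1n + X 1) - H_n((y t1k + X 1)-))`.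
-/

open Finset

theorem Nat.add_le_of_lt_of_mod_eq {m i j : ℕ} (hij : i < j) (hmod : i % m = j % m) :
    i + m ≤ j := by
  have := Nat.le_of_dvd (Nat.sub_pos_of_lt hij) ((Nat.modEq_iff_dvd' hij.le).1 hmod)
  omega

section Variation

variable {ι α E : Type*} [LinearOrder ι] [LinearOrder α] [PseudoEMetricSpace E]
  {f : α → E} {s : Set α}

theorem sum_edist_le_eVariationOn_of_ordered {a b : ι → α} (I : Finset ι)
    (hab : ∀ i ∈ I, a i ≤ b i) (hord : ∀ i ∈ I, ∀ j ∈ I, i < j → b i ≤ a j)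
    (ha : ∀ i ∈ I, a i ∈ s) (hb : ∀ i ∈ I, b i ∈ s) :
    ∑ i ∈ I, edist (f (a i)) (f (b i)) ≤ eVariationOn f s := by
  classical
  suffices key : ∀ c, (∀ i ∈ I, b i ≤ c) →
      ∑ i ∈ I, edist (f (a i)) (f (b i)) ≤ eVariationOn f (s ∩ Set.Iic c) by
    obtain rfl | hne := I.eq_empty_or_nonempty
    · simp
    · obtain ⟨j, -, hj⟩ := I.exists_max_image b hne
      exact (key (b j) hj).trans (eVariationOn.mono f Set.inter_subset_left)
  induction I using Finset.induction_on_max with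
  | empty => simp
  | insert j I hjI ih =>
    intro c hc
    have hj : j ∈ insert j I := mem_insert_self j I
    have hI : ∀ i ∈ I, i ∈ insert j I := fun i => mem_insert_of_mem
    have hsum_I : ∑ i ∈ I, edist (f (a i)) (f (b i)) ≤ eVariationOn f (s ∩ Set.Iic (a j)) :=
      ih (fun i hi => hab i (hI i hi)) (fun i hi i' hi' => hord i (hI i hi) i' (hI i' hi'))
        (fun i hi => ha i (hI i hi)) (fun i hi => hb i (hI i hi)) (a j)
        fun i hi => hord i (hI i hi) j hj (hjI i hi)
    rw [sum_insert fun hj' => (hjI j hj').false, add_comm]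
    calc ∑ i ∈ I, edist (f (a i)) (f (b i)) + edist (f (a j)) (f (b j))
        ≤ eVariationOn f (s ∩ Set.Iic (a j)) + eVariationOn f (s ∩ Set.Icc (a j) (b j)) := by
          gcongr
          exact eVariationOn.edist_le f ⟨ha j hj, le_rfl, hab j hj⟩ ⟨hb j hj, hab j hj, le_rfl⟩
      _ ≤ eVariationOn f (s ∩ Set.Iic (a j) ∪ s ∩ Set.Icc (a j) (b j)) :=
          eVariationOn.add_le_union f fun x hx y hy => hx.2.trans hy.2.1
      _ ≤ eVariationOn f (s ∩ Set.Iic c) := by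
          refine eVariationOn.mono f (Set.union_subset ?_ ?_)
          · exact Set.inter_subset_inter_right s
              (Set.Iic_subset_Iic.2 ((hab j hj).trans (hc j hj)))
          · exact fun x hx => ⟨hx.1, hx.2.2.trans (hc j hj)⟩

variable {a b : ℕ → α}

theorem sum_edist_le_mul_eVariationOn (I : Finset ℕ) {m : ℕ} (hm : 0 < m)
    (hab : ∀ i ∈ I, a i ≤ b i) (hgap : ∀ i ∈ I, ∀ j ∈ I, i + m ≤ j → b i ≤ a j)
    (ha : ∀ i ∈ I, a i ∈ s) (hb : ∀ i ∈ I, b i ∈ s) :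
    ∑ i ∈ I, edist (f (a i)) (f (b i)) ≤ m * eVariationOn f s := by
  rw [← sum_fiberwise_of_maps_to (g := (· % m)) (t := range m)
    fun i _ => mem_range.2 (Nat.mod_lt i hm)]
  calc ∑ r ∈ range m, ∑ i ∈ I with i % m = r, edist (f (a i)) (f (b i))
      ≤ ∑ r ∈ range m, eVariationOn f s := by
        refine sum_le_sum fun r _ => sum_edist_le_eVariationOn_of_ordered _ ?_ ?_ ?_ ?_
        · exact fun i hi => hab i (mem_filter.1 hi).1
        · intro i hi j hj hij
          rw [mem_filter] at hi hj
          exact hgap i hi.1 j hj.1 (Nat.add_le_of_lt_of_mod_eq hij (hi.2.trans hj.2.symm))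
        · exact fun i hi => ha i (mem_filter.1 hi).1
        · exact fun i hi => hb i (mem_filter.1 hi).1
    _ = m * eVariationOn f s := by simp

end Variation

section Overlap

variable {α : Type*} [LinearOrder α] {a b : ℕ → α}

/-- The largest number of the intervals `[a l, b l]`, `l ∈ I`, with a common point (a deepest
point can always be moved to a left endpoint). -/
def maxOverlap (a b : ℕ → α) (I : Finset ℕ) : ℕ :=
  I.sup fun j => #{l ∈ I | a l ≤ a j ∧ a j ≤ b l}

theorem exists_maxOverlap_eq {I : Finset ℕ} (hI : I.Nonempty) :
    ∃ j ∈ I, maxOverlap a b I = #{l ∈ I | a l ≤ a j ∧ a j ≤ b l} :=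
  exists_mem_eq_sup I hI _

theorem maxOverlap_pos {I : Finset ℕ} (hI : I.Nonempty) (hab : ∀ i ∈ I, a i ≤ b i) :
    0 < maxOverlap a b I := by
  obtain ⟨j, hj⟩ := hI
  refine lt_of_lt_of_le ?_ (le_sup (f := fun j => #{l ∈ I | a l ≤ a j ∧ a j ≤ b l}) hj)
  exact card_pos.2 ⟨j, mem_filter.2 ⟨hj, le_rfl, hab j hj⟩⟩

theorem le_of_add_maxOverlap_le {p q i j : ℕ} (ha : MonotoneOn a (Icc p q))
    (hb : MonotoneOn b (Icc p q)) (hi : i ∈ Icc p q) (hj : j ∈ Icc p q)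
    (hij : i + maxOverlap a b (Icc p q) ≤ j) : b i ≤ a j := by
  by_contra! hlt
  -- otherwise `a j` lies in the `j + 1 - i` intervals indexed by `Icc i j`
  have hsub : Icc i j ⊆ {l ∈ Icc p q | a l ≤ a j ∧ a j ≤ b l} := by
    intro l hl
    rw [mem_Icc] at hi hj hl
    have hl' : l ∈ Icc p q := mem_Icc.2 ⟨by omega, by omega⟩
    refine mem_filter.2 ⟨hl', ha hl' (mem_Icc.2 hj) hl.2, hlt.le.trans ?_⟩
    exact hb (mem_Icc.2 hi) hl' hl.1
  have hcard := (card_le_card hsub).trans (le_sup (f := fun j =>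
    #{l ∈ Icc p q | a l ≤ a j ∧ a j ≤ b l}) hj)
  rw [Nat.card_Icc] at hcard
  change j + 1 - i ≤ maxOverlap a b (Icc p q) at hcard
  omega

theorem sum_edist_le_maxOverlap_mul_eVariationOn {E : Type*} [PseudoEMetricSpace E]
    {f : α → E} {s : Set α} (p q : ℕ) (ha : MonotoneOn a (Icc p q))
    (hb : MonotoneOn b (Icc p q)) (hab : ∀ i ∈ Icc p q, a i ≤ b i)
    (has : ∀ i ∈ Icc p q, a i ∈ s) (hbs : ∀ i ∈ Icc p q, b i ∈ s) :
    ∑ i ∈ Icc p q, edist (f (a i)) (f (b i))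
      ≤ maxOverlap a b (Icc p q) * eVariationOn f s := by
  obtain hI | hI := (Icc p q).eq_empty_or_nonempty
  · simp [hI]
  · exact sum_edist_le_mul_eVariationOn _ (maxOverlap_pos hI hab) hab
      (fun i hi j hj hij => le_of_add_maxOverlap_le ha hb hi hj hij) has hbs

theorem sum_sq_sub_le_maxOverlap_mul_sq {ψ : α → ℝ} {s : Set α}
    (hψ : BoundedVariationOn ψ s) (p q : ℕ) (ha : MonotoneOn a (Icc p q))
    (hb : MonotoneOn b (Icc p q)) (hab : ∀ i ∈ Icc p q, a i ≤ b i)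
    (has : ∀ i ∈ Icc p q, a i ∈ s) (hbs : ∀ i ∈ Icc p q, b i ∈ s) :
    ∑ i ∈ Icc p q, (ψ (a i) - ψ (b i)) ^ 2
      ≤ maxOverlap a b (Icc p q) * (eVariationOn ψ s).toReal ^ 2 := by
  set V := (eVariationOn ψ s).toReal
  have hdist : ∑ i ∈ Icc p q, dist (ψ (a i)) (ψ (b i)) ≤ maxOverlap a b (Icc p q) * V := by
    have h := ENNReal.toReal_mono (ENNReal.mul_ne_top (ENNReal.natCast_ne_top _) hψ)
      (sum_edist_le_maxOverlap_mul_eVariationOn (f := ψ) p q ha hb hab has hbs)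
    simpa [ENNReal.toReal_sum, edist_dist] using h
  calc ∑ i ∈ Icc p q, (ψ (a i) - ψ (b i)) ^ 2
      = ∑ i ∈ Icc p q, dist (ψ (a i)) (ψ (b i)) * dist (ψ (a i)) (ψ (b i)) := by
        simp [Real.dist_eq, ← sq]
    _ ≤ ∑ i ∈ Icc p q, dist (ψ (a i)) (ψ (b i)) * V :=
        sum_le_sum fun i hi => mul_le_mul_of_nonneg_left
          (hψ.dist_le (has i hi) (hbs i hi)) dist_nonneg
    _ ≤ maxOverlap a b (Icc p q) * V * V := by rw [← sum_mul]; gcongr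
    _ = maxOverlap a b (Icc p q) * V ^ 2 := by ring

end Overlap

section Empirical

variable {ι α : Type*} [LinearOrder α]

theorem card_filter_le_and_le_add_card_filter_lt (s : Finset ι) (X : ι → α) {lo hi : α}
    (h : lo ≤ hi) :
    #{i ∈ s | lo ≤ X i ∧ X i ≤ hi} + #{i ∈ s | X i < lo} = #{i ∈ s | X i ≤ hi} := by
  rw [← card_filter_add_card_filter_not (s := {i ∈ s | X i ≤ hi}) (fun i => lo ≤ X i),
    filter_filter, filter_filter]
  congr 2
  · ext i; simp only [mem_filter]; tauto
  · ext i; simp only [mem_filter, not_le]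
    exact ⟨fun hmem => ⟨hmem.1, hmem.2.le.trans h, hmem.2⟩, fun hmem => ⟨hmem.1, hmem.2.2⟩⟩

variable {n : ℕ} {X : ι → ℝ} {Hn HnLeft : ℝ → ℝ} {s : Finset ι}

theorem sub_eq_card_filter_div (hHn : ∀ x, Hn x = (#{i ∈ s | X i ≤ x} : ℝ) / n)
    (hHnLeft : ∀ x, HnLeft x = (#{i ∈ s | X i < x} : ℝ) / n) {lo hi : ℝ} (h : lo ≤ hi) :
    Hn hi - HnLeft lo = (#{i ∈ s | lo ≤ X i ∧ X i ≤ hi} : ℝ) / n := by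
  rw [hHn, hHnLeft, ← card_filter_le_and_le_add_card_filter_lt s X h]
  push_cast
  ring

theorem sub_le_one_of_card_le (hs : #s ≤ n) (hHn : ∀ x, Hn x = (#{i ∈ s | X i ≤ x} : ℝ) / n)
    (hHnLeft : ∀ x, HnLeft x = (#{i ∈ s | X i < x} : ℝ) / n) (x y : ℝ) :
    Hn x - HnLeft y ≤ 1 := by
  have hle : Hn x ≤ 1 := by
    rw [hHn]
    exact div_le_one_of_le₀ (by exact_mod_cast (card_filter_le _ _).trans hs) n.cast_nonneg
  have hnonneg : 0 ≤ HnLeft y := by rw [hHnLeft]; positivity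
  linarith

theorem card_filter_le_mul_sSup (hn : 0 < n) (hs : #s ≤ n)
    (hHn : ∀ x, Hn x = (#{i ∈ s | X i ≤ x} : ℝ) / n)
    (hHnLeft : ∀ x, HnLeft x = (#{i ∈ s | X i < x} : ℝ) / n) {c t t' : ℝ} (htt' : t ≤ t')
    {y : ℝ} (hy : y ∈ Set.Icc 0 1) :
    (#{i ∈ s | y * t + c ≤ X i ∧ X i ≤ y * t' + c} : ℝ)
      ≤ n * sSup {v : ℝ | ∃ y ∈ Set.Icc (0 : ℝ) 1, v = Hn (y * t' + c) - HnLeft (y * t + c)} := by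
  have hbdd : BddAbove {v : ℝ | ∃ y ∈ Set.Icc (0 : ℝ) 1,
      v = Hn (y * t' + c) - HnLeft (y * t + c)} :=
    ⟨1, by rintro v ⟨z, -, rfl⟩; exact sub_le_one_of_card_le hs hHn hHnLeft _ _⟩
  have hlohi : y * t + c ≤ y * t' + c := by gcongr; exact hy.1
  rw [← mul_div_cancel_left₀ (#{i ∈ s | y * t + c ≤ X i ∧ X i ≤ y * t' + c} : ℝ)
    (Nat.cast_pos.2 hn).ne', mul_div_assoc, ← sub_eq_card_filter_div hHn hHnLeft hlohi]
  gcongr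
  exact le_csSup hbdd ⟨y, hy, rfl⟩

end Empirical

section Design

variable {X : ℕ → ℝ} {k : ℕ}

theorem monotoneOn_sub_div {s : Set ℕ} (hX : MonotoneOn X s) (c : ℝ) {t : ℝ} (ht : 0 ≤ t) :
    MonotoneOn (fun i => (X i - c) / t) s :=
  fun _ hi _ hj hij => div_le_div_of_nonneg_right (sub_le_sub_right (hX hi hj hij) c) ht

theorem sub_div_mem_Icc (hX : MonotoneOn X (Icc 1 k)) {t : ℝ} (ht : 0 < t)
    (htk : X k - X 1 ≤ t) {i : ℕ} (hi : i ∈ Icc 1 k) : (X i - X 1) / t ∈ Set.Icc 0 1 := by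
  have hk : 1 ≤ k := (mem_Icc.1 hi).1.trans (mem_Icc.1 hi).2
  have h1i : X 1 ≤ X i := hX (left_mem_Icc.2 hk) hi (mem_Icc.1 hi).1
  have hik : X i ≤ X k := hX hi (right_mem_Icc.2 hk) (mem_Icc.1 hi).2
  exact ⟨div_nonneg (by linarith) ht.le, (div_le_one ht).2 (by linarith)⟩

theorem sub_div_le_sub_div (hX : MonotoneOn X (Icc 1 k)) {t t' : ℝ} (ht : 0 < t)
    (htt' : t ≤ t') {i : ℕ} (hi : i ∈ Icc 1 k) : (X i - X 1) / t' ≤ (X i - X 1) / t :=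
  div_le_div_of_nonneg_left (sub_nonneg.2 (hX (left_mem_Icc.2 ((mem_Icc.1 hi).1.trans
    (mem_Icc.1 hi).2)) hi (mem_Icc.1 hi).1)) ht htt'

theorem card_filter_div_le_le_div_le {n : ℕ} (hkn : k ≤ n) {t t' : ℝ}
    (ht : 0 < t) (ht' : 0 < t') (y : ℝ) :
    #{l ∈ Icc 1 k | (X l - X 1) / t' ≤ y ∧ y ≤ (X l - X 1) / t}
      ≤ #{l ∈ Icc 1 n | y * t + X 1 ≤ X l ∧ X l ≤ y * t' + X 1} := by
  refine card_le_card fun l hl => ?_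
  simp only [mem_filter, mem_Icc, div_le_iff₀ ht', le_div_iff₀ ht] at hl ⊢
  refine ⟨⟨hl.1.1, hl.1.2.trans hkn⟩, ?_, ?_⟩ <;> linarith

end Design

theorem kernel_increment_variance_bound_general
    (ψ : ℝ → ℝ)
    (hψBV : BoundedVariationOn ψ (Set.Icc 0 1))
    (n : ℕ) (X : ℕ → ℝ)
    (hXmono : ∀ i ∈ Finset.Icc 1 n, ∀ j ∈ Finset.Icc 1 n, i < j → X i < X j)
    (k : ℕ) (hk1 : 1 < k) (hkn : k < n)
    (t1k t1n : ℝ) (ht1k : t1k = X k - X 1) (ht1n : t1n = X n - X 1)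
    (ht1kpos : 0 < t1k) (ht1npos : 0 < t1n)
    (Hn HnLeft : ℝ → ℝ)
    (hHn : ∀ x, Hn x = (((Finset.Icc 1 n).filter (fun i => X i ≤ x)).card : ℝ) / n)
    (hHnLeft : ∀ x, HnLeft x = (((Finset.Icc 1 n).filter (fun i => X i < x)).card : ℝ) / n) :
    (1 / n : ℝ) * ∑ i ∈ Finset.Icc 1 k,
        (ψ ((X i - X 1) / t1n) - ψ ((X i - X 1) / t1k)) ^ 2
      ≤ (eVariationOn ψ (Set.Icc 0 1)).toReal ^ 2 *
          sSup {v : ℝ | ∃ y ∈ Set.Icc (0 : ℝ) 1,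
            v = Hn (y * t1n + X 1) - HnLeft (y * t1k + X 1)} := by
  have hXn : MonotoneOn X (Icc 1 n) :=
    StrictMonoOn.monotoneOn fun i hi j hj hij => hXmono i hi j hj hij
  have hX : MonotoneOn X (Icc 1 k) := hXn.mono (coe_subset.2 (Icc_subset_Icc_right hkn.le))
  have ht : t1k ≤ t1n := by
    have := hXn (by simp; omega) (by simp; omega) hkn.le
    linarith
  have htk : X k - X 1 ≤ t1n := by linarith
  obtain ⟨j, hj, hjm⟩ := exists_maxOverlap_eq (a := fun i => (X i - X 1) / t1n)
    (b := fun i => (X i - X 1) / t1k) (nonempty_Icc.2 hk1.le)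
  set m := maxOverlap (fun i => (X i - X 1) / t1n) (fun i => (X i - X 1) / t1k) (Icc 1 k)
  have hsum := sum_sq_sub_le_maxOverlap_mul_sq hψBV 1 k (monotoneOn_sub_div hX _ ht1npos.le)
    (monotoneOn_sub_div hX _ ht1kpos.le) (fun i => sub_div_le_sub_div hX ht1kpos ht)
    (fun i => sub_div_mem_Icc hX ht1npos htk) (fun i => sub_div_mem_Icc hX ht1kpos ht1k.ge)
  have hm : (m : ℝ) ≤ n * sSup {v : ℝ | ∃ y ∈ Set.Icc (0 : ℝ) 1,
      v = Hn (y * t1n + X 1) - HnLeft (y * t1k + X 1)} := by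
    rw [hjm]
    exact (Nat.cast_le.2 (card_filter_div_le_le_div_le hkn.le ht1kpos ht1npos _)).trans
      (card_filter_le_mul_sSup (by omega) (by simp) hHn hHnLeft ht
        (sub_div_mem_Icc hX ht1npos htk hj))
  have hn : (0 : ℝ) < n := by exact_mod_cast (by omega : 0 < n)
  calc (1 / n : ℝ) * ∑ i ∈ Icc 1 k, (ψ ((X i - X 1) / t1n) - ψ ((X i - X 1) / t1k)) ^ 2
      ≤ 1 / n * (m * (eVariationOn ψ (Set.Icc 0 1)).toReal ^ 2) := by gcongr
    _ ≤ 1 / n * (n * sSup _ * (eVariationOn ψ (Set.Icc 0 1)).toReal ^ 2) := by gcongr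
    _ = _ := by rw [mul_assoc, one_div, inv_mul_cancel_left₀ hn.ne', mul_comm]

/-- For a continuous kernel `ψ` of finite total variation on `[0,1]` and design
points `0 ≤ X_1 < ⋯ < X_n ≤ 1`, with `t_{1k} = X_k − X_1 > 0`, `t_{1n} = X_n − X_1 > 0` and `H_n`
the empirical cdf of the design points (with `H_n(x−)` its left limit),
`(1/n) Σ_{i=1}^k (ψ((X_i−X_1)/t_{1n}) − ψ((X_i−X_1)/t_{1k}))²
  ≤ TV(ψ)² · sup_{y∈[0,1]} (H_n(y t_{1n} + X_1) − H_n((y t_{1k} + X_1)−))`. -/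
theorem kernel_increment_variance_bound
    (ψ : ℝ → ℝ) (hψc : ContinuousOn ψ (Set.Icc 0 1))
    (hψBV : BoundedVariationOn ψ (Set.Icc 0 1))
    (n : ℕ) (X : ℕ → ℝ)
    (hXmono : ∀ i ∈ Finset.Icc 1 n, ∀ j ∈ Finset.Icc 1 n, i < j → X i < X j)
    (hX0 : ∀ i ∈ Finset.Icc 1 n, 0 ≤ X i) (hX1 : ∀ i ∈ Finset.Icc 1 n, X i ≤ 1)
    (k : ℕ) (hk1 : 1 < k) (hkn : k < n)
    (t1k t1n : ℝ) (ht1k : t1k = X k - X 1) (ht1n : t1n = X n - X 1)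
    (ht1kpos : 0 < t1k) (ht1npos : 0 < t1n)
    (Hn HnLeft : ℝ → ℝ)
    (hHn : ∀ x, Hn x = (((Finset.Icc 1 n).filter (fun i => X i ≤ x)).card : ℝ) / n)
    (hHnLeft : ∀ x, HnLeft x = (((Finset.Icc 1 n).filter (fun i => X i < x)).card : ℝ) / n) :
    (1 / n : ℝ) * ∑ i ∈ Finset.Icc 1 k,
        (ψ ((X i - X 1) / t1n) - ψ ((X i - X 1) / t1k)) ^ 2
      ≤ (eVariationOn ψ (Set.Icc 0 1)).toReal ^ 2 *
          sSup {v : ℝ | ∃ y ∈ Set.Icc (0 : ℝ) 1,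
            v = Hn (y * t1n + X 1) - HnLeft (y * t1k + X 1)} :=
  kernel_increment_variance_bound_general ψ hψBV n X hXmono k hk1 hkn t1k t1n ht1k ht1n ht1kpos
    ht1npos Hn HnLeft hHn hHnLeft
end

section
/- Let f be a probability density on ℝ, symmetric about zero, absolutely continuous with integrable derivative f'. Then for every z ≥ 0 and every θ ∈ ℝ, | ∫_{ {y : |y| > z} } sign(y)·f(y − θ) dy | ≤ |θ|·∫_ℝ |f'(t)| dt. -/
open MeasureTheory
open scoped Interval

/-!
The tail set `{|y| > z}` is symmetric and `y ↦ sign y * f y` is odd, so the unshifted integral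
vanishes and the shifted one equals `∫_{|y|>z} sign y * (f (y - θ) - f y)`, which is bounded by
the `L¹` distance between `f` and its translate. Writing `f (y - θ) - f y` as an integral of `f'`
over an interval of length `|θ|` and applying Tonelli bounds that distance by `|θ| * ∫ |f'|`.
-/

open Set in
theorem setIntegral_eq_zero_of_odd {g : ℝ → ℝ} {s : Set ℝ} (hs : MeasurableSet s)
    (hs_neg : -s = s) (hg : ∀ x, g (-x) = -g x) : ∫ x in s, g x = 0 := by
  have hodd : ∀ x, s.indicator g (-x) = -s.indicator g x := by
    intro x
    by_cases hx : x ∈ s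
    · have hx' : -x ∈ s := by rwa [← mem_neg, hs_neg]
      rw [indicator_of_mem hx', indicator_of_mem hx, hg]
    · have hx' : -x ∉ s := by rwa [← mem_neg, hs_neg]
      rw [indicator_of_notMem hx', indicator_of_notMem hx, neg_zero]
  have h := integral_neg_eq_self (s.indicator g) volume
  simp only [hodd, integral_neg, integral_indicator hs] at h
  linarith

theorem Real.abs_sign_le_one (r : ℝ) : |Real.sign r| ≤ 1 := by
  rcases Real.sign_apply_eq r with h | h | h <;> simp [h]

theorem Real.measurable_sign : Measurable Real.sign :=
  Measurable.ite (measurableSet_lt measurable_id measurable_const) measurable_const <|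
    Measurable.ite (measurableSet_lt measurable_const measurable_id) measurable_const
      measurable_const

theorem MeasureTheory.Integrable.sign_mul {g : ℝ → ℝ} (hg : Integrable g) :
    Integrable fun x => Real.sign x * g x :=
  hg.bdd_mul Real.measurable_sign.aestronglyMeasurable
    (.of_forall Real.abs_sign_le_one)

theorem abs_setIntegral_sign_mul_le (g : ℝ → ℝ) (hg : Integrable g) (s : Set ℝ) :
    |∫ x in s, Real.sign x * g x| ≤ ∫ x, |g x| := by
  calc |∫ x in s, Real.sign x * g x| ≤ ∫ x in s, |g x| :=
        norm_integral_le_of_norm_le hg.abs.integrableOn <| .of_forall fun x => by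
          rw [Real.norm_eq_abs, abs_mul]
          exact mul_le_of_le_one_left (abs_nonneg (g x)) (Real.abs_sign_le_one x)
    _ ≤ ∫ x, |g x| := setIntegral_le_integral hg.abs (.of_forall fun x => abs_nonneg _)

theorem lintegral_setLIntegral_uIoc_comp_add {g : ℝ → ENNReal} (hg : Measurable g) (a b : ℝ) :
    ∫⁻ y, ∫⁻ t in Ι a b, g (y + t) = ENNReal.ofReal |b - a| * ∫⁻ x, g x := by
  rw [lintegral_lintegral_swap (f := fun y t => g (y + t)) (hg.comp measurable_add).aemeasurable]
  simp only [lintegral_add_right_eq_self (μ := volume) g, setLIntegral_const, Real.volume_uIoc]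
  exact mul_comm _ _

section Translation

variable {E : Type*} [NormedAddCommGroup E] [NormedSpace ℝ E]

theorem enorm_sub_le_setLIntegral_uIoc_comp_add {f f' : ℝ → E}
    (hac : ∀ a b, f b - f a = ∫ x in a..b, f' x) (y a b : ℝ) :
    ‖f (y + b) - f (y + a)‖ₑ ≤ ∫⁻ t in Ι a b, ‖f' (y + t)‖ₑ := by
  rw [hac, ← intervalIntegral.integral_comp_add_left, ← ofReal_norm,
    intervalIntegral.norm_integral_eq_norm_integral_uIoc, ofReal_norm]
  exact enorm_integral_le_lintegral_enorm _

variable [MeasurableSpace E] [OpensMeasurableSpace E]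

theorem lintegral_enorm_sub_comp_add_le {f f' : ℝ → E}
    (hac : ∀ a b, f b - f a = ∫ x in a..b, f' x) (hf' : Measurable f') (θ : ℝ) :
    ∫⁻ y, ‖f (y + θ) - f y‖ₑ ≤ ENNReal.ofReal |θ| * ∫⁻ x, ‖f' x‖ₑ := by
  calc ∫⁻ y, ‖f (y + θ) - f y‖ₑ ≤ ∫⁻ y, ∫⁻ t in Ι 0 θ, ‖f' (y + t)‖ₑ :=
        lintegral_mono fun y => by simpa using enorm_sub_le_setLIntegral_uIoc_comp_add hac y 0 θ
    _ = ENNReal.ofReal |θ| * ∫⁻ x, ‖f' x‖ₑ := by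
        rw [lintegral_setLIntegral_uIoc_comp_add hf'.enorm, sub_zero]

theorem integral_norm_sub_comp_add_le {f f' : ℝ → E}
    (hac : ∀ a b, f b - f a = ∫ x in a..b, f' x) (hf : Integrable f) (hf'_meas : Measurable f')
    (hf' : Integrable f') (θ : ℝ) :
    ∫ y, ‖f (y + θ) - f y‖ ≤ |θ| * ∫ x, ‖f' x‖ := by
  rw [integral_norm_eq_lintegral_enorm (f := fun y => f (y + θ) - f y)
      ((hf.comp_add_right θ).sub hf).aestronglyMeasurable,
    integral_norm_eq_lintegral_enorm hf'.aestronglyMeasurable,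
    ← ENNReal.toReal_ofReal (abs_nonneg θ), ← ENNReal.toReal_mul]
  exact ENNReal.toReal_mono (ENNReal.mul_ne_top ENNReal.ofReal_ne_top hf'.hasFiniteIntegral.ne)
    (lintegral_enorm_sub_comp_add_le hac hf'_meas θ)

end Translation

theorem shifted_tail_sign_integral_bound_general
    (f f' : ℝ → ℝ)
    (hfint : Integrable f)
    (hfsymm : ∀ x, f (-x) = f x)
    (hac : ∀ a b : ℝ, f b - f a = ∫ x in a..b, f' x)
    (hf'meas : Measurable f')
    (hf'int : Integrable f')
    (z : ℝ) (θ : ℝ) :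
    |∫ y in {y : ℝ | z < |y|}, Real.sign y * f (y - θ)| ≤ |θ| * ∫ t : ℝ, |f' t| := by
  set S := {y : ℝ | z < |y|}
  have hS : MeasurableSet S := measurableSet_lt measurable_const measurable_abs
  have hS_neg : -S = S := by ext; simp [S]
  have hshift : Integrable fun y => f (y - θ) := hfint.comp_sub_right θ
  have hsymm_part : ∫ y in S, Real.sign y * f y = 0 :=
    setIntegral_eq_zero_of_odd hS hS_neg fun y => by rw [Real.sign_neg, hfsymm, neg_mul]
  calc |∫ y in S, Real.sign y * f (y - θ)| = |∫ y in S, Real.sign y * (f (y - θ) - f y)| := by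
        simp_rw [mul_sub]
        rw [integral_sub hshift.sign_mul.integrableOn hfint.sign_mul.integrableOn, hsymm_part,
          sub_zero]
    _ ≤ ∫ y, |f (y - θ) - f y| := abs_setIntegral_sign_mul_le _ (hshift.sub hfint) S
    _ ≤ |θ| * ∫ t, |f' t| := by
        simpa [sub_eq_add_neg] using integral_norm_sub_comp_add_le hac hfint hf'meas hf'int (-θ)

/-- For a symmetric absolutely continuous probability density `f` on `ℝ` with
integrable derivative `f'`, for every `z ≥ 0` and `θ ∈ ℝ`,
`| ∫_{|y|>z} sign(y) f(y−θ) dy | ≤ |θ| ∫ |f'|`. -/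
theorem shifted_tail_sign_integral_bound
    (f f' : ℝ → ℝ)
    (hfnn : ∀ x, 0 ≤ f x) (hfint : Integrable f)
    (hfprob : ∫ x, f x = 1)
    (hfsymm : ∀ x, f (-x) = f x)
    (hac : ∀ a b : ℝ, f b - f a = ∫ x in a..b, f' x)
    (hf'meas : Measurable f')
    (hf'int : Integrable f')
    (z : ℝ) (hz : 0 ≤ z) (θ : ℝ) :
    |∫ y in {y : ℝ | z < |y|}, Real.sign y * f (y - θ)| ≤ |θ| * ∫ t : ℝ, |f' t| :=
  shifted_tail_sign_integral_bound_general f f' hfint hfsymm hac hf'meas hf'int z θ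
end

section
/- Let f be a bounded probability density on ℝ, symmetric about zero, absolutely continuous with bounded and integrable derivative f', and let F be its distribution function. Then there exists a constant C > 0, depending only on f (e.g., C = 2·(sup|f|)·∫|f'|), such that for all θ ∈ ℝ: | ∫_ℝ (2F(y) − 1)²·( f(y − θ) − f(y) ) dy | ≤ C·θ². -/
/-!
Write the integral as `J θ = ∫ (g (y + θ) - g y) f y` with `g = (2F - 1)²`. As `f` is even,
`F (-y) = 1 - F y`, so `g` is even as well and the substitution `y ↦ -y` gives `J (-θ) = J θ`.
Hence `2 J θ = ∫ (g (y + θ) + g (y - θ) - 2 g y) f y`, where the first-order terms cancel, and the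
second difference of `g` is `O(θ²)` because `g' = 4 (2F - 1) f` is Lipschitz.
-/

open MeasureTheory Set
open scoped NNReal

theorem lipschitzWith_of_sub_eq_intervalIntegral {f f' : ℝ → ℝ} {K : ℝ≥0}
    (hf : ∀ a b, f b - f a = ∫ x in a..b, f' x) (hf' : ∀ x, |f' x| ≤ K) : LipschitzWith K f :=
  LipschitzWith.of_dist_le_mul fun x y => by
    rw [Real.dist_eq, hf y x, Real.dist_eq, ← Real.norm_eq_abs]
    exact intervalIntegral.norm_integral_le_of_norm_le_const fun t _ => hf' t

theorem hasDerivAt_of_sub_eq_intervalIntegral {f f' : ℝ → ℝ}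
    (hf : ∀ a b, f b - f a = ∫ x in a..b, f' x) (hf' : Continuous f') (x : ℝ) :
    HasDerivAt f (f' x) x := by
  have hprimitive : f = fun u => f 0 + ∫ t in (0 : ℝ)..u, f' t :=
    funext fun u => by linarith [hf 0 u]
  rw [hprimitive]
  exact (hf'.integral_hasStrictDerivAt 0 x).hasDerivAt.const_add _

theorem LipschitzWith.mul_of_norm_le {α R : Type*} [PseudoMetricSpace α] [SeminormedRing R]
    {u v : α → R} {Ku Kv A B : ℝ≥0} (hu : LipschitzWith Ku u) (hv : LipschitzWith Kv v)
    (hu_le : ∀ x, ‖u x‖ ≤ A) (hv_le : ∀ x, ‖v x‖ ≤ B) :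
    LipschitzWith (A * Kv + Ku * B) fun x => u x * v x := by
  refine LipschitzWith.of_dist_le_mul fun x y => ?_
  have hsplit : u x * v x - u y * v y = u x * (v x - v y) + (u x - u y) * v y := by noncomm_ring
  rw [dist_eq_norm, hsplit]
  calc ‖u x * (v x - v y) + (u x - u y) * v y‖
      ≤ ‖u x‖ * ‖v x - v y‖ + ‖u x - u y‖ * ‖v y‖ :=
        (norm_add_le _ _).trans (add_le_add (norm_mul_le _ _) (norm_mul_le _ _))
    _ ≤ A * (Kv * dist x y) + Ku * dist x y * B := by
        rw [← dist_eq_norm, ← dist_eq_norm]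
        gcongr
        exacts [hu_le x, hv.dist_le_mul x y, hu.dist_le_mul x y, hv_le y]
    _ = ↑(A * Kv + Ku * B) * dist x y := by push_cast; ring

theorem abs_add_add_sub_two_mul_le_of_lipschitzWith_deriv {g g' : ℝ → ℝ} {L : ℝ≥0}
    (hg : ∀ t, HasDerivAt g (g' t) t) (hg' : LipschitzWith L g') (y θ : ℝ) :
    |g (y + θ) + g (y - θ) - 2 * g y| ≤ 2 * L * θ ^ 2 := by
  have hderiv : ∀ s, HasDerivAt (fun s => g (y + s) + g (y - s)) (g' (y + s) - g' (y - s)) s := by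
    intro s
    have hplus := (hg (y + s)).comp s ((hasDerivAt_id s).const_add y)
    have hminus := (hg (y - s)).comp s ((hasDerivAt_id s).const_sub y)
    exact (hplus.add hminus).congr_deriv (by ring)
  have hbound : ∀ s ∈ uIcc 0 θ, ‖g' (y + s) - g' (y - s)‖ ≤ 2 * L * |θ| := by
    intro s hs
    have hsθ : |s| ≤ |θ| := by simpa using abs_sub_left_of_mem_uIcc hs
    calc ‖g' (y + s) - g' (y - s)‖ ≤ L * dist (y + s) (y - s) := hg'.dist_le_mul _ _
      _ = 2 * L * |s| := by
        rw [Real.dist_eq, show y + s - (y - s) = 2 * s by ring, abs_mul, abs_two]; ring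
      _ ≤ 2 * L * |θ| := by gcongr
  have := (convex_uIcc 0 θ).norm_image_sub_le_of_norm_hasDerivWithin_le
    (fun s _ => (hderiv s).hasDerivWithinAt) hbound left_mem_uIcc right_mem_uIcc
  simp only [add_zero, sub_zero, Real.norm_eq_abs] at this
  calc |g (y + θ) + g (y - θ) - 2 * g y| = |g (y + θ) + g (y - θ) - (g y + g y)| := by ring_nf
    _ ≤ 2 * L * |θ| * |θ| := this
    _ = 2 * L * θ ^ 2 := by rw [mul_assoc, ← sq, sq_abs]

theorem abs_integral_mul_sub_comp_sub_le {f g g' : ℝ → ℝ} {L : ℝ≥0} {C : ℝ}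
    (hf : Integrable f) (hf_even : ∀ x, f (-x) = f x) (hg : ∀ t, HasDerivAt g (g' t) t)
    (hg' : LipschitzWith L g') (hg_even : ∀ t, g (-t) = g t) (hg_le : ∀ t, |g t| ≤ C) (θ : ℝ) :
    |∫ y, g y * (f (y - θ) - f y)| ≤ L * θ ^ 2 * ∫ y, |f y| := by
  have hg_cont : Continuous g := continuous_iff_continuousAt.2 fun t => (hg t).continuousAt
  have hgf : ∀ s, Integrable fun y => g (y + s) * f y := fun s =>
    hf.bdd_mul (hg_cont.comp (continuous_add_const s)).aestronglyMeasurable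
      (ae_of_all _ fun y => (Real.norm_eq_abs _).trans_le (hg_le _))
  have hint : ∀ s, Integrable fun y => (g (y + s) - g y) * f y := fun s => by
    simpa only [sub_mul, add_zero, Pi.sub_def] using (hgf s).sub (hgf 0)
  set J : ℝ → ℝ := fun s => ∫ y, (g (y + s) - g y) * f y
  have hJ : ∫ y, g y * (f (y - θ) - f y) = J θ := by
    have hshift : Integrable fun y => g y * f (y - θ) := by
      simpa only [sub_add_cancel] using (hgf θ).comp_sub_right θ
    calc ∫ y, g y * (f (y - θ) - f y) = (∫ y, g y * f (y - θ)) - ∫ y, g (y + 0) * f y := by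
          simp only [add_zero, mul_sub]
          exact integral_sub hshift (by simpa using hgf 0)
      _ = (∫ y, g (y + θ) * f y) - ∫ y, g (y + 0) * f y := by
          rw [← integral_add_right_eq_self _ θ]
          simp only [add_sub_cancel_right]
      _ = J θ := by
          rw [← integral_sub (hgf θ) (hgf 0)]
          simp only [J, add_zero, sub_mul]
  have hJ_neg : J (-θ) = J θ := by
    simp only [J]
    rw [← integral_neg_eq_self]
    congr 1 with y
    rw [hf_even, ← neg_add, hg_even, hg_even]
  have hJ_sum : J θ + J (-θ) = ∫ y, (g (y + θ) + g (y - θ) - 2 * g y) * f y := by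
    rw [← integral_add (hint θ) (hint (-θ))]
    congr 1 with y
    rw [sub_eq_add_neg y θ]
    ring
  have hbound : ∀ y, ‖(g (y + θ) + g (y - θ) - 2 * g y) * f y‖ ≤ 2 * L * θ ^ 2 * |f y| := by
    intro y
    rw [Real.norm_eq_abs, abs_mul]
    gcongr
    exact abs_add_add_sub_two_mul_le_of_lipschitzWith_deriv hg hg' y θ
  have := norm_integral_le_of_norm_le (hf.abs.const_mul _) (ae_of_all _ hbound)
  rw [integral_const_mul, Real.norm_eq_abs, ← hJ_sum, hJ_neg] at this
  rw [← two_mul, abs_mul, abs_two] at this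
  rw [hJ]
  linarith

theorem abs_two_mul_integral_Iic_sub_one_le {f : ℝ → ℝ} (hf_nonneg : ∀ x, 0 ≤ f x)
    (hf : Integrable f) (hf_one : ∫ x, f x = 1) (x : ℝ) :
    |2 * (∫ y in Iic x, f y) - 1| ≤ 1 := by
  have h_nonneg : 0 ≤ ∫ y in Iic x, f y :=
    setIntegral_nonneg measurableSet_Iic fun y _ => hf_nonneg y
  have h_le_one : ∫ y in Iic x, f y ≤ 1 :=
    hf_one ▸ setIntegral_le_integral hf (ae_of_all _ hf_nonneg)
  rw [abs_le]
  constructor <;> linarith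

theorem integral_Iic_neg_of_even {f : ℝ → ℝ} (hf : Integrable f) (hf_even : ∀ x, f (-x) = f x)
    (hf_one : ∫ x, f x = 1) (x : ℝ) :
    ∫ y in Iic (-x), f y = 1 - ∫ y in Iic x, f y := by
  have hreflect : ∫ y in Iic (-x), f y = ∫ y in Ioi x, f y := by
    simpa only [hf_even, neg_neg] using integral_comp_neg_Iic (-x) f
  rw [hreflect, ← hf_one, ← integral_add_compl measurableSet_Iic hf, compl_Iic]
  ring

theorem hasDerivAt_two_mul_sub_one_sq {f F : ℝ → ℝ}
    (hF : ∀ a b, F b - F a = ∫ x in a..b, f x) (hf : Continuous f) (t : ℝ) :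
    HasDerivAt (fun t => (2 * F t - 1) ^ 2) (4 * (2 * F t - 1) * f t) t :=
  ((((hasDerivAt_of_sub_eq_intervalIntegral hF hf t).const_mul 2).sub_const 1).pow 2).congr_deriv
    (by ring)

theorem lipschitzWith_two_mul_sub_one_mul {f F : ℝ → ℝ} {K M : ℝ≥0}
    (hF : ∀ a b, F b - F a = ∫ x in a..b, f x) (hF_abs : ∀ t, |2 * F t - 1| ≤ 1)
    (hf_le : ∀ x, |f x| ≤ M) (hf : LipschitzWith K f) :
    LipschitzWith (4 * K + 8 * M * M) fun t => 4 * (2 * F t - 1) * f t := by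
  have hu : LipschitzWith (8 * M) fun t => 4 * (2 * F t - 1) :=
    lipschitzWith_of_sub_eq_intervalIntegral (f' := fun x => 8 * f x)
      (fun a b => by rw [intervalIntegral.integral_const_mul, ← hF]; ring)
      fun x => by
        rw [abs_mul, abs_of_pos (by norm_num : (0 : ℝ) < 8)]
        push_cast
        gcongr
        exact hf_le x
  refine hu.mul_of_norm_le (A := 4) hf (fun t => ?_) fun x =>
    (Real.norm_eq_abs _).trans_le (hf_le x)
  rw [Real.norm_eq_abs, abs_mul, abs_of_pos four_pos]
  push_cast
  linarith [hF_abs t]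

theorem squared_cdf_shift_second_order_general
    (f f' : ℝ → ℝ)
    (hfnn : ∀ x, 0 ≤ f x) (hfint : Integrable f)
    (hfprob : ∫ x, f x = 1)
    (hfbdd : ∃ M : ℝ, ∀ x, f x ≤ M)
    (hfsymm : ∀ x, f (-x) = f x)
    (hac : ∀ a b : ℝ, f b - f a = ∫ x in a..b, f' x)
    (hf'bdd : ∃ M : ℝ, ∀ x, |f' x| ≤ M)
    (F : ℝ → ℝ) (hF : ∀ x, F x = ∫ y in Set.Iic x, f y) :
    ∃ C > (0 : ℝ), ∀ θ : ℝ,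
      |∫ y : ℝ, (2 * F y - 1) ^ 2 * (f (y - θ) - f y)| ≤ C * θ ^ 2 := by
  obtain ⟨M₀, hM₀⟩ := hfbdd
  obtain ⟨M₁, hM₁⟩ := hf'bdd
  set M := M₀.toNNReal
  have hf_le : ∀ x, |f x| ≤ M := fun x =>
    (abs_of_nonneg (hfnn x)).trans_le ((hM₀ x).trans (Real.le_coe_toNNReal M₀))
  have hf_lip : LipschitzWith M₁.toNNReal f := lipschitzWith_of_sub_eq_intervalIntegral hac
    fun x => (hM₁ x).trans (Real.le_coe_toNNReal M₁)
  have hF_sub : ∀ a b, F b - F a = ∫ x in a..b, f x := fun a b => by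
    rw [hF, hF]
    exact intervalIntegral.integral_Iic_sub_Iic hfint.integrableOn hfint.integrableOn
  have hF_abs : ∀ t, |2 * F t - 1| ≤ 1 := fun t =>
    hF t ▸ abs_two_mul_integral_Iic_sub_one_le hfnn hfint hfprob t
  have hg_even : ∀ t, (2 * F (-t) - 1) ^ 2 = (2 * F t - 1) ^ 2 := fun t => by
    rw [hF, hF, integral_Iic_neg_of_even hfint hfsymm hfprob]
    ring
  have hg_le : ∀ t, |(2 * F t - 1) ^ 2| ≤ 1 := fun t => by
    rw [abs_pow]
    exact pow_le_one₀ (abs_nonneg _) (hF_abs t)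
  set L := 4 * M₁.toNNReal + 8 * M * M
  refine ⟨L + 1, by positivity, fun θ => ?_⟩
  calc |∫ y : ℝ, (2 * F y - 1) ^ 2 * (f (y - θ) - f y)|
      ≤ L * θ ^ 2 * ∫ y, |f y| :=
        abs_integral_mul_sub_comp_sub_le hfint hfsymm
          (hasDerivAt_two_mul_sub_one_sq hF_sub hf_lip.continuous)
          (lipschitzWith_two_mul_sub_one_mul hF_sub hF_abs hf_le hf_lip) hg_even hg_le θ
    _ ≤ (L + 1) * θ ^ 2 := by
        simp only [abs_of_nonneg (hfnn _), hfprob]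
        nlinarith [sq_nonneg θ]

/-- For a bounded, symmetric, absolutely continuous probability density `f` on `ℝ`
with bounded integrable derivative `f'` and cdf `F`, there is `C > 0` (depending only on `f`)
with `| ∫ (2F(y)−1)² (f(y−θ) − f(y)) dy | ≤ C θ²` for all `θ`. -/
theorem squared_cdf_shift_second_order
    (f f' : ℝ → ℝ)
    (hfnn : ∀ x, 0 ≤ f x) (hfint : Integrable f)
    (hfprob : ∫ x, f x = 1)
    (hfbdd : ∃ M : ℝ, ∀ x, f x ≤ M)
    (hfsymm : ∀ x, f (-x) = f x)
    (hac : ∀ a b : ℝ, f b - f a = ∫ x in a..b, f' x)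
    (hf'meas : Measurable f')
    (hf'bdd : ∃ M : ℝ, ∀ x, |f' x| ≤ M)
    (hf'int : Integrable f')
    (F : ℝ → ℝ) (hF : ∀ x, F x = ∫ y in Set.Iic x, f y) :
    ∃ C > (0 : ℝ), ∀ θ : ℝ,
      |∫ y : ℝ, (2 * F y - 1) ^ 2 * (f (y - θ) - f y)| ≤ C * θ ^ 2 :=
  squared_cdf_shift_second_order_general f f' hfnn hfint hfprob hfbdd hfsymm hac hf'bdd F hF
end

section
/- Let f be a probability density on ℝ, symmetric about zero, absolutely continuous with bounded and integrable derivative f', and let F be its distribution function. Then there exists a constant C > 0, depending only on f, such that for all θ ∈ ℝ: | ∫_ℝ (2F(y) − 1)·f(y − θ) dy − 2θ·∫_ℝ f(y)² dy | ≤ C·θ². -/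
/-!
Substituting `y = t + θ` turns the integral into `∫ (2 F(t + θ) − 1) f(t) dt`. Since `f` is
Lipschitz (its derivative is bounded), `F(t + θ) = F(t) + θ f(t) + O(θ²)` uniformly in `t`, so the
integral equals `∫ (2F − 1) f + 2θ ∫ f² + O(θ²)`. The first term vanishes because symmetry of `f`
gives `F(−t) = 1 − F(t)`, making `(2F − 1) f` odd.
-/

open MeasureTheory Set

theorem lipschitzWith_of_eq_intervalIntegral {f f' : ℝ → ℝ} {M : ℝ}
    (hac : ∀ a b : ℝ, f b - f a = ∫ x in a..b, f' x) (hM : ∀ x, |f' x| ≤ M) :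
    LipschitzWith (Real.toNNReal M) f := by
  refine LipschitzWith.of_dist_le_mul fun x y => ?_
  rw [Real.dist_eq, Real.dist_eq, hac y x]
  calc ‖∫ t in y..x, f' t‖ ≤ M * |x - y| :=
        intervalIntegral.norm_integral_le_of_norm_le_const fun t _ => hM t
    _ ≤ Real.toNNReal M * |x - y| := by gcongr; exact Real.le_coe_toNNReal M

theorem abs_le_of_eq_intervalIntegral {f f' : ℝ → ℝ}
    (hac : ∀ a b : ℝ, f b - f a = ∫ x in a..b, f' x) (hf' : Integrable f') (x : ℝ) :
    |f x| ≤ |f 0| + ∫ t, ‖f' t‖ := by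
  have hdiff : |f x - f 0| ≤ ∫ t, ‖f' t‖ := by
    rw [hac 0 x]
    exact intervalIntegral.norm_integral_le_integral_norm_uIoc.trans
      (setIntegral_le_integral hf'.norm (.of_forall fun t => norm_nonneg _))
  calc |f x| = |f 0 + (f x - f 0)| := by rw [add_sub_cancel]
    _ ≤ |f 0| + |f x - f 0| := abs_add_le _ _
    _ ≤ |f 0| + ∫ t, ‖f' t‖ := by gcongr

theorem integrable_sq_of_eq_intervalIntegral {f f' : ℝ → ℝ} (hf : Integrable f)
    (hac : ∀ a b : ℝ, f b - f a = ∫ x in a..b, f' x) (hf' : Integrable f') :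
    Integrable fun x => f x ^ 2 := by
  simpa only [sq] using hf.bdd_mul hf.aestronglyMeasurable
    (.of_forall (abs_le_of_eq_intervalIntegral hac hf'))

theorem LipschitzWith.abs_intervalIntegral_sub_mul_le {f : ℝ → ℝ} {K : NNReal}
    (hf : LipschitzWith K f) (t θ : ℝ) :
    |(∫ y in t..t + θ, f y) - θ * f t| ≤ K * θ ^ 2 := by
  have hconst : θ * f t = ∫ _ in t..t + θ, f t := by simp
  rw [hconst, ← intervalIntegral.integral_sub
    (hf.continuous.intervalIntegrable t (t + θ)) intervalIntegrable_const]
  have hbound : ∀ y ∈ uIoc t (t + θ), ‖f y - f t‖ ≤ K * |θ| := fun y hy =>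
    calc ‖f y - f t‖ = dist (f y) (f t) := rfl
      _ ≤ K * |y - t| := hf.dist_le_mul y t
      _ ≤ K * |θ| := mul_le_mul_of_nonneg_left
        (by simpa using abs_sub_left_of_mem_uIcc (uIoc_subset_uIcc hy)) K.2
  calc ‖∫ y in t..t + θ, (f y - f t)‖ ≤ K * |θ| * |t + θ - t| :=
        intervalIntegral.norm_integral_le_of_norm_le_const hbound
    _ = K * θ ^ 2 := by rw [add_sub_cancel_left, mul_assoc, ← sq, sq_abs]

theorem abs_integral_mul_le_of_abs_le {f g : ℝ → ℝ} {c : ℝ} (hfnn : ∀ x, 0 ≤ f x)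
    (hf : Integrable f) (hfprob : ∫ x, f x = 1) (hgc : ∀ x, |g x| ≤ c) :
    |∫ x, g x * f x| ≤ c := by
  have hbound : ∀ x, ‖g x * f x‖ ≤ c * f x := fun x => by
    rw [Real.norm_eq_abs, abs_mul, abs_of_nonneg (hfnn x)]
    exact mul_le_mul_of_nonneg_right (hgc x) (hfnn x)
  calc |∫ x, g x * f x| ≤ ∫ x, c * f x :=
        norm_integral_le_of_norm_le (hf.const_mul c) (.of_forall hbound)
    _ = c := by rw [integral_const_mul, hfprob, mul_one]

section Cdf

variable {f F : ℝ → ℝ}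

theorem monotone_cdf (hfnn : ∀ x, 0 ≤ f x) (hf : Integrable f)
    (hF : ∀ x, F x = ∫ y in Iic x, f y) : Monotone F := fun a b hab => by
  rw [hF a, hF b]
  exact setIntegral_mono_set hf.integrableOn (.of_forall hfnn)
    (.of_forall (Iic_subset_Iic.mpr hab))

theorem abs_two_mul_cdf_sub_one_le (hfnn : ∀ x, 0 ≤ f x) (hf : Integrable f)
    (hfprob : ∫ x, f x = 1) (hF : ∀ x, F x = ∫ y in Iic x, f y) (x : ℝ) :
    |2 * F x - 1| ≤ 1 := by
  have h0 : 0 ≤ F x := hF x ▸ setIntegral_nonneg measurableSet_Iic fun y _ => hfnn y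
  have h1 : F x ≤ 1 := hF x ▸ hfprob ▸ setIntegral_le_integral hf (.of_forall hfnn)
  rw [abs_le]
  constructor <;> linarith

theorem cdf_add_sub_cdf (hf : Integrable f) (hF : ∀ x, F x = ∫ y in Iic x, f y) (t θ : ℝ) :
    F (t + θ) - F t = ∫ y in t..t + θ, f y := by
  rw [hF, hF]
  exact intervalIntegral.integral_Iic_sub_Iic hf.integrableOn hf.integrableOn

theorem cdf_neg (hf : Integrable f) (hfprob : ∫ x, f x = 1) (hfsymm : ∀ x, f (-x) = f x)
    (hF : ∀ x, F x = ∫ y in Iic x, f y) (x : ℝ) : F (-x) = 1 - F x := by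
  have hupper : F (-x) = ∫ y in Ioi x, f y := by
    rw [hF, ← neg_neg x, ← integral_comp_neg_Iic, neg_neg]
    simp only [hfsymm]
  have htotal : F x + ∫ y in Ioi x, f y = 1 := by
    rw [hF, ← hfprob]
    exact intervalIntegral.integral_Iic_add_Ioi hf.integrableOn hf.integrableOn
  linarith

theorem integral_two_mul_cdf_sub_one_mul_eq_zero (hf : Integrable f) (hfprob : ∫ x, f x = 1)
    (hfsymm : ∀ x, f (-x) = f x) (hF : ∀ x, F x = ∫ y in Iic x, f y) :
    ∫ t, (2 * F t - 1) * f t = 0 := by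
  have hodd : ∀ t, (2 * F (-t) - 1) * f (-t) = -((2 * F t - 1) * f t) := fun t => by
    rw [cdf_neg hf hfprob hfsymm hF, hfsymm]
    ring
  have h := integral_neg_eq_self (fun t => (2 * F t - 1) * f t) volume
  simp only [hodd, integral_neg] at h
  linarith

theorem abs_integral_cdf_mul_shift_sub_le {K : NNReal} (hfnn : ∀ x, 0 ≤ f x)
    (hf : Integrable f) (hfprob : ∫ x, f x = 1) (hfsymm : ∀ x, f (-x) = f x)
    (hlip : LipschitzWith K f) (hf2 : Integrable fun x => f x ^ 2)
    (hF : ∀ x, F x = ∫ y in Iic x, f y) (θ : ℝ) :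
    |(∫ y, (2 * F y - 1) * f (y - θ)) - 2 * θ * ∫ y, f y ^ 2| ≤ 2 * K * θ ^ 2 := by
  set R : ℝ → ℝ := fun t => F (t + θ) - F t - θ * f t
  have hFmeas : Measurable F := (monotone_cdf hfnn hf hF).measurable
  have hR : ∀ t, |2 * R t| ≤ 2 * K * θ ^ 2 := fun t => by
    rw [abs_mul, abs_two, mul_assoc]
    gcongr
    simpa only [R, cdf_add_sub_cdf hf hF] using hlip.abs_intervalIntegral_sub_mul_le t θ
  have hcdf := abs_two_mul_cdf_sub_one_le hfnn hf hfprob hF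
  have hint1 : Integrable fun t => (2 * F t - 1) * f t :=
    hf.bdd_mul (by fun_prop) (.of_forall hcdf)
  have hint2 : Integrable fun t => 2 * R t * f t :=
    hf.bdd_mul (by fun_prop) (.of_forall hR)
  have hshift : ∫ y, (2 * F y - 1) * f (y - θ) = ∫ t, (2 * F (t + θ) - 1) * f t := by
    simpa using (integral_add_right_eq_self (fun y => (2 * F y - 1) * f (y - θ)) θ).symm
  have hsplit : ∫ t, (2 * F (t + θ) - 1) * f t
      = (∫ t, (2 * F t - 1) * f t) + (∫ t, 2 * R t * f t) + 2 * θ * ∫ t, f t ^ 2 := by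
    have hpointwise : ∀ t, (2 * F (t + θ) - 1) * f t
        = ((2 * F t - 1) * f t + 2 * R t * f t) + 2 * θ * f t ^ 2 := fun t => by
      simp only [R]
      ring
    have hint12 : Integrable fun t => (2 * F t - 1) * f t + 2 * R t * f t := hint1.add hint2
    simp only [hpointwise]
    rw [integral_add hint12 (hf2.const_mul _), integral_add hint1 hint2,
      integral_const_mul]
  rw [hshift, hsplit, integral_two_mul_cdf_sub_one_mul_eq_zero hf hfprob hfsymm hF, zero_add,
    add_sub_cancel_right]
  exact abs_integral_mul_le_of_abs_le hfnn hf hfprob hR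

end Cdf

theorem cdf_shift_first_order_expansion_general
    (f f' : ℝ → ℝ)
    (hfnn : ∀ x, 0 ≤ f x) (hfint : Integrable f)
    (hfprob : ∫ x, f x = 1)
    (hfsymm : ∀ x, f (-x) = f x)
    (hac : ∀ a b : ℝ, f b - f a = ∫ x in a..b, f' x)
    (hf'bdd : ∃ M : ℝ, ∀ x, |f' x| ≤ M)
    (hf'int : Integrable f')
    (F : ℝ → ℝ) (hF : ∀ x, F x = ∫ y in Set.Iic x, f y) :
    ∃ C > (0 : ℝ), ∀ θ : ℝ,
      |(∫ y : ℝ, (2 * F y - 1) * f (y - θ)) - 2 * θ * ∫ y : ℝ, (f y) ^ 2| ≤ C * θ ^ 2 := by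
  obtain ⟨M, hM⟩ := hf'bdd
  refine ⟨2 * Real.toNNReal M + 1, by positivity, fun θ => ?_⟩
  calc _ ≤ 2 * Real.toNNReal M * θ ^ 2 :=
        abs_integral_cdf_mul_shift_sub_le hfnn hfint hfprob hfsymm
          (lipschitzWith_of_eq_intervalIntegral hac hM)
          (integrable_sq_of_eq_intervalIntegral hfint hac hf'int) hF θ
    _ ≤ _ := by gcongr; linarith

/-- For a symmetric, absolutely continuous probability density `f` on `ℝ` with
bounded integrable derivative `f'` and cdf `F`, there is `C > 0` (depending only on `f`) with
`| ∫ (2F(y)−1) f(y−θ) dy − 2θ ∫ f² | ≤ C θ²` for all `θ`. -/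
theorem cdf_shift_first_order_expansion
    (f f' : ℝ → ℝ)
    (hfnn : ∀ x, 0 ≤ f x) (hfint : Integrable f)
    (hfprob : ∫ x, f x = 1)
    (hfsymm : ∀ x, f (-x) = f x)
    (hac : ∀ a b : ℝ, f b - f a = ∫ x in a..b, f' x)
    (hf'meas : Measurable f')
    (hf'bdd : ∃ M : ℝ, ∀ x, |f' x| ≤ M)
    (hf'int : Integrable f')
    (F : ℝ → ℝ) (hF : ∀ x, F x = ∫ y in Set.Iic x, f y) :
    ∃ C > (0 : ℝ), ∀ θ : ℝ,
      |(∫ y : ℝ, (2 * F y - 1) * f (y - θ)) - 2 * θ * ∫ y : ℝ, (f y) ^ 2| ≤ C * θ ^ 2 :=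
  cdf_shift_first_order_expansion_general f f' hfnn hfint hfprob hfsymm hac hf'bdd hf'int F hF
end
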